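/- arXiv:2306.00342 — 3 statements merged into one kernel-verified Lean document; each statement's English description precedes it below -/
import Mathlib

section
/- The eigenvalues of P_W = Σ_{j=1}^N (WᵀW)^{(N−j)/N} ⊗ (WWᵀ)^{(j−1)/N} are exactly Σ_{j=1}^N σ_{r'}^{2(N−j)/N} σ_r^{2(j−1)/N} for all pairs (r, r') of singular-value indices, with corresponding eigenvectors vec(u_r v_{r'}ᵀ), where W = UΣVᵀ is an SVD with left singular vectors u_r and right singular vectors v_{r'}. -/
open scoped Matrix
open Kronecker

/-- Column-major vectorization. -/
def vec {m n : ℕ} (M : Matrix (Fin m) (Fin n) ℝ) : Fin n × Fin m → ℝ :=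
  fun p => M p.2 p.1

/-- Real power of a symmetric matrix via the spectral decomposition (`0^0 = 1`). -/
noncomputable def rpowMat {n : ℕ} {A : Matrix (Fin n) (Fin n) ℝ} (hA : A.IsHermitian)
    (a : ℝ) : Matrix (Fin n) (Fin n) ℝ :=
  (hA.eigenvectorUnitary : Matrix (Fin n) (Fin n) ℝ) *
    Matrix.diagonal (fun i => Real.rpow (hA.eigenvalues i) a) *
    star (hA.eigenvectorUnitary : Matrix (Fin n) (Fin n) ℝ)


lemma sum_mulVec' {ι p q : Type*} [Fintype q] [DecidableEq ι] (s : Finset ι)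
    (f : ι → Matrix p q ℝ) (x : q → ℝ) :
    (∑ i ∈ s, f i).mulVec x = ∑ i ∈ s, (f i).mulVec x := by
  ext j
  simp only [Matrix.mulVec, dotProduct, Finset.sum_apply, Matrix.sum_apply,
    Finset.sum_mul]
  rw [Finset.sum_comm]

lemma rpowMat_mulVec_eig {n : ℕ} {A : Matrix (Fin n) (Fin n) ℝ} (hA : A.IsHermitian)
    (a c : ℝ) (x : Fin n → ℝ) (hx : A.mulVec x = c • x) :
    (rpowMat hA a).mulVec x = (Real.rpow c a) • x := by
  set Q : Matrix (Fin n) (Fin n) ℝ := (hA.eigenvectorUnitary : Matrix (Fin n) (Fin n) ℝ)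
  have hQ1 : Q * star Q = 1 := (Matrix.mem_unitaryGroup_iff).mp hA.eigenvectorUnitary.2
  have hQ2 : star Q * Q = 1 := (Matrix.mem_unitaryGroup_iff').mp hA.eigenvectorUnitary.2
  set y : Fin n → ℝ := (star Q).mulVec x with hy
  have hDy : (Matrix.diagonal hA.eigenvalues).mulVec y = c • y := by
    have h : (Matrix.diagonal hA.eigenvalues * star Q).mulVec x = (star Q * A).mulVec x := by
      congr 1
      conv_rhs => rw [hA.spectral_theorem]
      simp only [Q, Unitary.conjStarAlgAut_apply]
      rw [← mul_assoc, ← mul_assoc, hQ2, one_mul]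
      congr 1
    rw [← Matrix.mulVec_mulVec, ← Matrix.mulVec_mulVec] at h
    rw [hy, h, hx, Matrix.mulVec_smul]
  have key : ∀ i, Real.rpow (hA.eigenvalues i) a * y i = Real.rpow c a * y i := by
    intro i
    rcases eq_or_ne (y i) 0 with h0 | h0
    · simp [h0]
    · have h2 : hA.eigenvalues i * y i = c * y i := by
        have := congrFun hDy i
        rwa [Matrix.mulVec_diagonal, Pi.smul_apply, smul_eq_mul] at this
      rw [mul_right_cancel₀ h0 h2]
  have hD' : (Matrix.diagonal (fun i => Real.rpow (hA.eigenvalues i) a)).mulVec y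
      = (Real.rpow c a) • y := by
    ext i
    rw [Matrix.mulVec_diagonal, Pi.smul_apply, smul_eq_mul, key i]
  have hx' : Q.mulVec y = x := by
    rw [hy, Matrix.mulVec_mulVec, hQ1, Matrix.one_mulVec]
  calc (rpowMat hA a).mulVec x
      = Q.mulVec ((Matrix.diagonal (fun i => Real.rpow (hA.eigenvalues i) a)).mulVec y) := by
        rw [rpowMat, ← Matrix.mulVec_mulVec, ← Matrix.mulVec_mulVec]
    _ = (Real.rpow c a) • x := by rw [hD', Matrix.mulVec_smul, hx']

lemma kron_mulVec_vec {m n : ℕ} (A : Matrix (Fin n) (Fin n) ℝ) (B : Matrix (Fin m) (Fin m) ℝ)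
    (u : Fin m → ℝ) (v : Fin n → ℝ) :
    (A ⊗ₖ B).mulVec (vec (Matrix.vecMulVec u v))
      = fun p => (A.mulVec v p.1) * (B.mulVec u p.2) := by
  ext p
  simp only [Matrix.mulVec, dotProduct, Matrix.kroneckerMap_apply, vec,
    Matrix.vecMulVec_apply, Fintype.sum_prod_type]
  rw [Finset.sum_mul_sum]
  apply Finset.sum_congr rfl
  intro k _
  apply Finset.sum_congr rfl
  intro l _
  ring

/-- The eigenvalues of `P_W = Σ_{j=1}^N (WᵀW)^{(N−j)/N} ⊗ (WWᵀ)^{(j−1)/N}` are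
exactly `Σ_{j=1}^N σ_{r'}^{2(N−j)/N} σ_r^{2(j−1)/N}` for all pairs `(r, r')` of
singular-value indices, with eigenvectors `vec(u_r v_{r'}ᵀ)`, where `u_r` (resp.
`v_{r'}`) are the columns of the orthogonal matrix `U` (resp. `V`) of left
(resp. right) singular vectors of `W` (the index `j : Fin N` is 0-based). -/
theorem stmt12 {m n : ℕ} (N : ℕ) (hN : 0 < N) (W : Matrix (Fin m) (Fin n) ℝ)
    (h1 : (Wᵀ * W).IsHermitian) (h2 : (W * Wᵀ).IsHermitian)
    (U : Matrix (Fin m) (Fin m) ℝ) (V : Matrix (Fin n) (Fin n) ℝ)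
    (hU : U ∈ Matrix.orthogonalGroup (Fin m) ℝ)
    (hV : V ∈ Matrix.orthogonalGroup (Fin n) ℝ)
    (σu : Fin m → ℝ) (σv : Fin n → ℝ)
    (hσu : ∀ r, 0 ≤ σu r) (hσv : ∀ r', 0 ≤ σv r')
    (hWu : ∀ r, (W * Wᵀ).mulVec (fun i => U i r) = (σu r ^ 2) • (fun i => U i r))
    (hWv : ∀ r', (Wᵀ * W).mulVec (fun i => V i r') = (σv r' ^ 2) • (fun i => V i r')) :
    ∀ (r : Fin m) (r' : Fin n),
      (∑ j : Fin N,
          rpowMat h1 (((N : ℝ) - 1 - (j : ℕ)) / (N : ℝ)) ⊗ₖ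
            rpowMat h2 (((j : ℕ) : ℝ) / (N : ℝ))).mulVec
        (vec (Matrix.vecMulVec (fun i => U i r) (fun i => V i r')))
      = (∑ j : Fin N,
            Real.rpow (σv r' ^ 2) (((N : ℝ) - 1 - (j : ℕ)) / (N : ℝ)) *
              Real.rpow (σu r ^ 2) (((j : ℕ) : ℝ) / (N : ℝ))) •
          vec (Matrix.vecMulVec (fun i => U i r) (fun i => V i r')) := by
  intro r r'
  rw [sum_mulVec', Finset.sum_smul]
  apply Finset.sum_congr rfl
  intro j _
  rw [kron_mulVec_vec,
    rpowMat_mulVec_eig h1 _ _ _ (hWv r'),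
    rpowMat_mulVec_eig h2 _ _ _ (hWu r)]
  ext p
  simp [vec, Matrix.vecMulVec_apply]
  ring
end

section
/- If W(t) = U(t)D(t)V(t)ᵀ is an analytic singular value decomposition of a smooth matrix path, then the derivative of the i-th singular value satisfies σ̇ᵢ(t) = uᵢ(t)ᵀ Ẇ(t) vᵢ(t), where uᵢ, vᵢ are the corresponding left and right singular vectors. -/
/-!
Since `Uᵀ U = 1` and `Vᵀ V = 1`, the SVD gives `W vᵢ = σᵢ uᵢ`, `uᵢᵀ W = σᵢ vᵢᵀ` and
`σᵢ = uᵢᵀ W vᵢ`. Differentiating the last identity,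
`σ̇ᵢ = u̇ᵢᵀ W vᵢ + uᵢᵀ Ẇ vᵢ + uᵢᵀ W v̇ᵢ = σᵢ (u̇ᵢᵀ uᵢ) + uᵢᵀ Ẇ vᵢ + σᵢ (vᵢᵀ v̇ᵢ)`,
and the outer terms vanish because differentiating `uᵢᵀ uᵢ = 1` and `vᵢᵀ vᵢ = 1` gives
`u̇ᵢᵀ uᵢ = 0 = vᵢᵀ v̇ᵢ`.
-/

open scoped Matrix

attribute [local instance] Matrix.frobeniusNormedAddCommGroup Matrix.frobeniusNormedSpace

open Matrix

section Calculus

variable {𝕜 : Type*} [NontriviallyNormedField 𝕜] {ι m n : Type*} [Fintype ι] [Fintype m]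
  [Fintype n] {x : 𝕜}

theorem HasDerivAt.dotProduct {f g : 𝕜 → ι → 𝕜} {f' g' : ι → 𝕜}
    (hf : HasDerivAt f f' x) (hg : HasDerivAt g g' x) :
    HasDerivAt (fun t => f t ⬝ᵥ g t) (f' ⬝ᵥ g x + f x ⬝ᵥ g') x := by
  simp only [_root_.dotProduct, ← Finset.sum_add_distrib]
  exact HasDerivAt.fun_sum fun i _ => (hasDerivAt_pi.1 hf i).mul (hasDerivAt_pi.1 hg i)

variable {A : 𝕜 → Matrix m n 𝕜} {A' : Matrix m n 𝕜}

-- The Frobenius norm induces the product topology definitionally, so `proj a` is continuous for it.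
theorem HasDerivAt.matrix_apply (h : HasDerivAt A A' x) (a : m) :
    HasDerivAt (fun t => A t a) (A' a) x :=
  (ContinuousLinearMap.proj (R := 𝕜) (φ := fun _ : m => n → 𝕜) a).hasFDerivAt.comp_hasDerivAt x h

theorem HasDerivAt.matrix_transpose_apply (h : HasDerivAt A A' x) (b : n) :
    HasDerivAt (fun t => (A t)ᵀ b) (A'ᵀ b) x :=
  hasDerivAt_pi.2 fun a => hasDerivAt_pi.1 (h.matrix_apply a) b

theorem HasDerivAt.mulVec {v : 𝕜 → n → 𝕜} {v' : n → 𝕜}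
    (hA : HasDerivAt A A' x) (hv : HasDerivAt v v' x) :
    HasDerivAt (fun t => A t *ᵥ v t) (A' *ᵥ v x + A x *ᵥ v') x :=
  hasDerivAt_pi.2 fun a => (hA.matrix_apply a).dotProduct hv

end Calculus

theorem HasDerivAt.dotProduct_eq_zero_of_dotProduct_self_const {ι : Type*} [Fintype ι]
    {f : ℝ → ι → ℝ} {f' : ι → ℝ} {x c : ℝ} (hf : HasDerivAt f f' x)
    (hc : ∀ t, f t ⬝ᵥ f t = c) : f' ⬝ᵥ f x = 0 := by
  have hconst : HasDerivAt (fun t => f t ⬝ᵥ f t) 0 x := by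
    simpa only [hc] using hasDerivAt_const x c
  have h := (hf.dotProduct hf).unique hconst
  rw [dotProduct_comm (f x)] at h
  linarith

theorem transpose_apply_dotProduct_self_eq_one {R m k : Type*} [NonAssocSemiring R] [Fintype m]
    [DecidableEq k] {U : Matrix m k R} (hU : Uᵀ * U = 1) (i : k) : Uᵀ i ⬝ᵥ Uᵀ i = 1 :=
  (congrFun (congrFun hU i) i).trans (one_apply_eq i)

section SVD

variable {R : Type*} [CommRing R] {m n k : Type*} [Fintype k] [DecidableEq k]
  {W : Matrix m n R} {U : Matrix m k R} {V : Matrix n k R} {s : k → R}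

theorem mulVec_rightSingularVector [Fintype n] (hW : W = U * diagonal s * Vᵀ)
    (hV : Vᵀ * V = 1) (i : k) : W *ᵥ Vᵀ i = s i • Uᵀ i := by
  have h : W * V = U * diagonal s := by rw [hW, Matrix.mul_assoc, hV, Matrix.mul_one]
  ext a
  rw [Pi.smul_apply, smul_eq_mul, mul_comm]
  exact (congrFun (congrFun h a) i).trans (mul_diagonal _ _ a i)

theorem vecMul_leftSingularVector [Fintype m] (hW : W = U * diagonal s * Vᵀ)
    (hU : Uᵀ * U = 1) (i : k) : Uᵀ i ᵥ* W = s i • Vᵀ i := by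
  rw [← mulVec_transpose]
  refine mulVec_rightSingularVector ?_ hU i
  rw [hW, transpose_mul, transpose_mul, transpose_transpose, diagonal_transpose, Matrix.mul_assoc]

theorem singularValue_eq_dotProduct [Fintype m] [Fintype n] (hW : W = U * diagonal s * Vᵀ)
    (hU : Uᵀ * U = 1) (hV : Vᵀ * V = 1) (i : k) : s i = Uᵀ i ⬝ᵥ W *ᵥ Vᵀ i := by
  rw [mulVec_rightSingularVector hW hV, dotProduct_smul,
    transpose_apply_dotProduct_self_eq_one hU, smul_eq_mul, mul_one]

end SVD

/-- For a smooth (analytic) SVD `W(t) = U(t) D(t) V(t)ᵀ` of a smooth matrix path,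
the derivative of the `i`-th singular value satisfies
`σ̇ᵢ(t₀) = uᵢ(t₀)ᵀ Ẇ(t₀) vᵢ(t₀)`, where `uᵢ, vᵢ` are the corresponding left and
right singular vectors (columns of `U` and `V`, which have orthonormal columns). -/
theorem stmt13 {m n k : ℕ}
    (W : ℝ → Matrix (Fin m) (Fin n) ℝ) (U : ℝ → Matrix (Fin m) (Fin k) ℝ)
    (σ : ℝ → Fin k → ℝ) (V : ℝ → Matrix (Fin n) (Fin k) ℝ)
    (t₀ : ℝ) (W' : Matrix (Fin m) (Fin n) ℝ) (U' : Matrix (Fin m) (Fin k) ℝ)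
    (σ' : Fin k → ℝ) (V' : Matrix (Fin n) (Fin k) ℝ)
    (hsvd : ∀ t, W t = U t * Matrix.diagonal (σ t) * (V t)ᵀ)
    (hUorth : ∀ t, (U t)ᵀ * U t = 1) (hVorth : ∀ t, (V t)ᵀ * V t = 1)
    (hW : HasDerivAt W W' t₀) (hU : HasDerivAt U U' t₀) (hV : HasDerivAt V V' t₀)
    (hσ : ∀ i, HasDerivAt (fun t => σ t i) (σ' i) t₀) :
    ∀ i, σ' i = (fun a => U t₀ a i) ⬝ᵥ W'.mulVec (fun b => V t₀ b i) := by
  intro i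
  have hσ_eq : (fun t => σ t i) = fun t => (U t)ᵀ i ⬝ᵥ W t *ᵥ (V t)ᵀ i :=
    funext fun t => singularValue_eq_dotProduct (hsvd t) (hUorth t) (hVorth t) i
  have hderiv := (hU.matrix_transpose_apply i).dotProduct
    (hW.mulVec (hV.matrix_transpose_apply i))
  rw [← hσ_eq] at hderiv
  have hu : U'ᵀ i ⬝ᵥ (U t₀)ᵀ i = 0 :=
    (hU.matrix_transpose_apply i).dotProduct_eq_zero_of_dotProduct_self_const
      fun t => transpose_apply_dotProduct_self_eq_one (hUorth t) i
  have hv : V'ᵀ i ⬝ᵥ (V t₀)ᵀ i = 0 :=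
    (hV.matrix_transpose_apply i).dotProduct_eq_zero_of_dotProduct_self_const
      fun t => transpose_apply_dotProduct_self_eq_one (hVorth t) i
  rw [(hσ i).unique hderiv, mulVec_rightSingularVector (hsvd t₀) (hVorth t₀), dotProduct_add,
    dotProduct_mulVec _ (W t₀), vecMul_leftSingularVector (hsvd t₀) (hUorth t₀),
    dotProduct_smul, smul_dotProduct, dotProduct_comm ((V t₀)ᵀ i), hu, hv, smul_zero,
    zero_add, add_zero]
  rfl
end

section
/- If W = W_N ⋯ W_1 with balanced weights (W_{j+1}ᵀW_{j+1} = W_j W_jᵀ for all j), then W_j W_jᵀ = (WWᵀ)^{j/N} restricted appropriately; in particular for square matrices, WᵀW and WWᵀ powers satisfy (W_1⋯W_{j-1})(W_1⋯W_{j-1})ᵀ = (WᵀW)^{(j−1)/N}. -/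
open scoped Matrix

private lemma sandwich {d : ℕ} (X : Matrix (Fin d) (Fin d) ℝ) (m : ℕ) :
    Xᵀ * (X * Xᵀ) ^ m * X = (Xᵀ * X) ^ (m + 1) := by
  induction m with
  | zero => simp [pow_succ]
  | succ m ih =>
    rw [pow_succ, pow_succ, ← ih]
    simp only [Matrix.mul_assoc]

private lemma key {d N : ℕ} (hN : 0 < N) (Ws : Fin N → Matrix (Fin d) (Fin d) ℝ)
    (hbal : ∀ (j : Fin N) (h : (j : ℕ) + 1 < N),
      (Ws ⟨(j : ℕ) + 1, h⟩)ᵀ * Ws ⟨(j : ℕ) + 1, h⟩ = Ws j * (Ws j)ᵀ) :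
    ∀ k (hk : k < N) (m : ℕ),
      (((List.ofFn fun i => (Ws i)ᵀ).take (k + 1)).prod) *
        (Ws ⟨k, hk⟩ * (Ws ⟨k, hk⟩)ᵀ) ^ m *
        (((List.ofFn fun i => (Ws i)ᵀ).take (k + 1)).prod)ᵀ
      = ((Ws ⟨0, hN⟩)ᵀ * Ws ⟨0, hN⟩) ^ (k + 1 + m) := by
  intro k
  induction k with
  | zero =>
    intro hk m
    have h1 : (List.ofFn fun i => (Ws i)ᵀ).take 1 = [(Ws ⟨0, hN⟩)ᵀ] := by
      have h0 : 0 < (List.ofFn fun i => (Ws i)ᵀ).length := by simpa using hN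
      rw [List.take_one, List.head?_eq_getElem?, List.getElem?_eq_getElem h0]
      simp
    rw [h1]
    simp only [List.prod_singleton, Matrix.transpose_transpose]
    rw [sandwich]
    ring_nf
  | succ k ih =>
    intro hk m
    have hk' : k < N := Nat.lt_of_succ_lt hk
    have hlen : k + 1 < (List.ofFn fun i => (Ws i)ᵀ).length := by
      simpa using hk
    have hsplit : ((List.ofFn fun i => (Ws i)ᵀ).take (k + 1 + 1)).prod
        = ((List.ofFn fun i => (Ws i)ᵀ).take (k + 1)).prod * (Ws ⟨k + 1, hk⟩)ᵀ := by
      rw [List.prod_take_succ _ _ hlen]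
      congr 1
      simp
    rw [hsplit, Matrix.transpose_mul, Matrix.transpose_transpose]
    have hmid : (Ws ⟨k + 1, hk⟩)ᵀ * (Ws ⟨k + 1, hk⟩ * (Ws ⟨k + 1, hk⟩)ᵀ) ^ m * Ws ⟨k + 1, hk⟩
        = (Ws ⟨k, hk'⟩ * (Ws ⟨k, hk'⟩)ᵀ) ^ (m + 1) := by
      rw [sandwich, hbal ⟨k, hk'⟩ hk]
    calc ((List.ofFn fun i => (Ws i)ᵀ).take (k + 1)).prod * (Ws ⟨k + 1, hk⟩)ᵀ *
          (Ws ⟨k + 1, hk⟩ * (Ws ⟨k + 1, hk⟩)ᵀ) ^ m *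
          (Ws ⟨k + 1, hk⟩ * ((List.ofFn fun i => (Ws i)ᵀ).take (k + 1)).prodᵀ)
        = ((List.ofFn fun i => (Ws i)ᵀ).take (k + 1)).prod *
            ((Ws ⟨k + 1, hk⟩)ᵀ * (Ws ⟨k + 1, hk⟩ * (Ws ⟨k + 1, hk⟩)ᵀ) ^ m * Ws ⟨k + 1, hk⟩) *
            ((List.ofFn fun i => (Ws i)ᵀ).take (k + 1)).prodᵀ := by
          simp only [Matrix.mul_assoc]
      _ = ((Ws ⟨0, hN⟩)ᵀ * Ws ⟨0, hN⟩) ^ (k + 1 + 1 + m) := by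
          rw [hmid, ih hk' (m + 1)]
          ring_nf

private lemma keyBB {d N : ℕ} (hN : 0 < N) (Ws : Fin N → Matrix (Fin d) (Fin d) ℝ)
    (hbal : ∀ (j : Fin N) (h : (j : ℕ) + 1 < N),
      (Ws ⟨(j : ℕ) + 1, h⟩)ᵀ * Ws ⟨(j : ℕ) + 1, h⟩ = Ws j * (Ws j)ᵀ) :
    ∀ k, k ≤ N →
      (((List.ofFn fun i => (Ws i)ᵀ).take k).prod) *
        (((List.ofFn fun i => (Ws i)ᵀ).take k).prod)ᵀ
      = ((Ws ⟨0, hN⟩)ᵀ * Ws ⟨0, hN⟩) ^ k := by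
  intro k hk
  match k, hk with
  | 0, _ => simp
  | (k + 1), hk =>
    have hk' : k < N := hk
    have := key hN Ws hbal k hk' 0
    simpa using this

private lemma rpow_pow_aux (x : ℝ) (hx : 0 ≤ x) (N j : ℕ) (hN : 0 < N) :
    Real.rpow (x ^ N) ((j : ℝ) / (N : ℝ)) = x ^ j := by
  show (x ^ N : ℝ) ^ ((j : ℝ) / (N : ℝ)) = x ^ j
  rw [← Real.rpow_natCast x N, ← Real.rpow_mul hx]
  have : (N : ℝ) * ((j : ℝ) / (N : ℝ)) = (j : ℝ) := by
    field_simp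
  rw [this, Real.rpow_natCast]


private lemma rpowMat_eq_cfc {n : ℕ} {A : Matrix (Fin n) (Fin n) ℝ} (hA : A.IsHermitian)
    (a : ℝ) : rpowMat hA a = cfc (fun x : ℝ => Real.rpow x a) A := by
  rw [Matrix.IsHermitian.cfc_eq hA]
  unfold rpowMat Matrix.IsHermitian.cfc
  congr 1

/-- Balancedness lemma of Arora et al. (2018): if `W = W_N ⋯ W_1` with balanced
weights (`W_{j+1}ᵀ W_{j+1} = W_j W_jᵀ`), then for the partial product
`B = W_1ᵀ W_2ᵀ ⋯ W_{j-1}ᵀ` one has `B Bᵀ = (WᵀW)^{(j−1)/N}` (here `Ws i = W_{i+1}`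
is 0-based and `j : Fin N`, so `B` consists of the first `j` transposed factors
and the exponent is `j/N`). -/
theorem stmt18 (d N : ℕ) (hN : 0 < N) (Ws : Fin N → Matrix (Fin d) (Fin d) ℝ)
    (hbal : ∀ (j : Fin N) (h : (j : ℕ) + 1 < N),
      (Ws ⟨(j : ℕ) + 1, h⟩)ᵀ * Ws ⟨(j : ℕ) + 1, h⟩ = Ws j * (Ws j)ᵀ)
    (W : Matrix (Fin d) (Fin d) ℝ) (hW : W = (((List.ofFn Ws).reverse)).prod)
    (h1 : (Wᵀ * W).IsHermitian) (j : Fin N)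
    (B : Matrix (Fin d) (Fin d) ℝ)
    (hB : B = ((List.ofFn fun i => (Ws i)ᵀ).take (j : ℕ)).prod) :
    B * Bᵀ = rpowMat h1 (((j : ℕ) : ℝ) / (N : ℝ)) := by
  set X := Ws ⟨0, hN⟩ with hX
  set A : Matrix (Fin d) (Fin d) ℝ := Xᵀ * X with hA
  -- B * Bᵀ = A ^ j
  have hBB : B * Bᵀ = A ^ (j : ℕ) := by
    rw [hB]; exact keyBB hN Ws hbal (j : ℕ) j.isLt.le
  -- Wᵀ = full product of transposes
  have hWt : Wᵀ = (List.ofFn fun i => (Ws i)ᵀ).prod := by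
    rw [hW, Matrix.transpose_list_prod, List.map_reverse, List.reverse_reverse,
      List.map_ofFn]
    rfl
  have hWA : Wᵀ * W = A ^ N := by
    have h2 := keyBB hN Ws hbal N le_rfl
    rw [List.take_of_length_le (by simp)] at h2
    calc Wᵀ * W = Wᵀ * (Wᵀ)ᵀ := by rw [Matrix.transpose_transpose]
      _ = A ^ N := by rw [hWt]; exact h2
  -- A is PSD
  have hPSD : A.PosSemidef := by
    have := Matrix.posSemidef_conjTranspose_mul_self X
    rwa [Matrix.conjTranspose_eq_transpose_of_trivial] at this
  have hAsa : IsSelfAdjoint A := hPSD.isHermitian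
  have hspec : ∀ x ∈ spectrum ℝ A, 0 ≤ x := by
    intro x hx
    rw [Matrix.IsHermitian.spectrum_real_eq_range_eigenvalues hPSD.isHermitian] at hx
    obtain ⟨i, rfl⟩ := hx
    exact hPSD.eigenvalues_nonneg i
  -- rewrite RHS through cfc
  have ha0 : (0 : ℝ) ≤ ((j : ℕ) : ℝ) / (N : ℝ) := by positivity
  rw [rpowMat_eq_cfc]
  have hcfcW : cfc (fun x : ℝ => Real.rpow x (((j : ℕ) : ℝ) / (N : ℝ))) (Wᵀ * W)
      = cfc (fun x : ℝ => Real.rpow (x ^ N) (((j : ℕ) : ℝ) / (N : ℝ))) A := by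
    rw [hWA, ← cfc_comp_pow (fun x : ℝ => Real.rpow x (((j : ℕ) : ℝ) / (N : ℝ))) N A
      ((Real.continuous_rpow_const ha0).continuousOn) hAsa]
  rw [hcfcW, cfc_congr (g := fun x : ℝ => x ^ (j : ℕ))
    (fun x hx => rpow_pow_aux x (hspec x hx) N (j : ℕ) hN),
    cfc_pow_id A (j : ℕ) hAsa, hBB]
end
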